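/- arXiv:2507.11962 — 4 statements merged into one kernel-verified Lean document; each statement's English description precedes it below -/
import Mathlib

section
/- For pairwise distinct centers c₁,…,cₙ ∈ ℝ^d and a fixed γ > 0, the Gaussian functions x ↦ exp(−γ²‖x − c_i‖²), i = 1,…,n, are linearly independent as functions ℝ^d → ℝ. -/
open RealInnerProductSpace

/-- For pairwise distinct centers `cᵢ ∈ ℝ^d` and fixed `γ > 0`, the Gaussians
`x ↦ exp (−γ²‖x − cᵢ‖²)` are linearly independent as functions `ℝ^d → ℝ`. -/
theorem gaussians_nd_linearIndependent
    {d n : ℕ} (c : Fin n → EuclideanSpace ℝ (Fin d)) (hc : Function.Injective c)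
    (γ : ℝ) (hγ : 0 < γ) :
    LinearIndependent ℝ
      (fun i => fun x : EuclideanSpace ℝ (Fin d) =>
        Real.exp (-γ ^ 2 * ‖x - c i‖ ^ 2)) := by
  classical
  have hγ2 : (2 * γ ^ 2 : ℝ) ≠ 0 := by positivity
  -- characters
  let χ : Fin n → (Multiplicative (EuclideanSpace ℝ (Fin d)) →* ℝ) := fun i =>
    { toFun := fun x => Real.exp (2 * γ ^ 2 * ⟪Multiplicative.toAdd x, c i⟫)
      map_one' := by simp
      map_mul' := fun x y => by
        simp [inner_add_left, mul_add, Real.exp_add] }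
  have hinj : Function.Injective χ := by
    intro i j hij
    apply hc
    have h2 : ∀ x : EuclideanSpace ℝ (Fin d), ⟪x, c i⟫ = ⟪x, c j⟫ := by
      intro x
      have h1 : Real.exp (2 * γ ^ 2 * ⟪x, c i⟫) = Real.exp (2 * γ ^ 2 * ⟪x, c j⟫) :=
        DFunLike.congr_fun hij (Multiplicative.ofAdd x)
      exact mul_left_cancel₀ hγ2 (Real.exp_injective h1)
    have : ⟪c i - c j, c i - c j⟫ = 0 := by
      rw [inner_sub_right, h2 (c i - c j), sub_self]
    rw [inner_self_eq_zero, sub_eq_zero] at this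
    exact this
  have key : LinearIndependent ℝ
      (fun i : Fin n => fun x : EuclideanSpace ℝ (Fin d) =>
        Real.exp (2 * γ ^ 2 * ⟪x, c i⟫)) :=
    (linearIndependent_monoidHom (Multiplicative (EuclideanSpace ℝ (Fin d))) ℝ).comp χ hinj
  rw [Fintype.linearIndependent_iff] at key ⊢
  intro g hg
  have ha : ∀ i, g i * Real.exp (-γ ^ 2 * ‖c i‖ ^ 2) = 0 := by
    apply key (fun i => g i * Real.exp (-γ ^ 2 * ‖c i‖ ^ 2))
    funext x
    have hx := congrFun hg x
    simp only [Finset.sum_apply, Pi.smul_apply, smul_eq_mul, Pi.zero_apply] at hx ⊢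
    have expand : ∀ i, g i * Real.exp (-γ ^ 2 * ‖x - c i‖ ^ 2)
        = Real.exp (-γ ^ 2 * ‖x‖ ^ 2) *
          (g i * Real.exp (-γ ^ 2 * ‖c i‖ ^ 2) * Real.exp (2 * γ ^ 2 * ⟪x, c i⟫)) := by
      intro i
      rw [@norm_sub_sq_real, show -γ ^ 2 * (‖x‖ ^ 2 - 2 * ⟪x, c i⟫ + ‖c i‖ ^ 2)
          = -γ ^ 2 * ‖x‖ ^ 2 + (-γ ^ 2 * ‖c i‖ ^ 2 + 2 * γ ^ 2 * ⟪x, c i⟫) by ring,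
        Real.exp_add, Real.exp_add]
      ring
    have h0 : Real.exp (-γ ^ 2 * ‖x‖ ^ 2) *
        ∑ i, g i * Real.exp (-γ ^ 2 * ‖c i‖ ^ 2) * Real.exp (2 * γ ^ 2 * ⟪x, c i⟫) = 0 := by
      rw [Finset.mul_sum, ← hx]
      exact Finset.sum_congr rfl fun i _ => (expand i).symm
    exact (mul_eq_zero.1 h0).resolve_left (Real.exp_ne_zero _)
  intro i
  rcases mul_eq_zero.1 (ha i) with h | h
  · exact h
  · exact absurd h (Real.exp_ne_zero _)
end

section
/- For pairwise distinct real shifts b₁,…,bₙ, the hat functions x ↦ max(0, 1 − |x − b_i|), i = 1,…,n, are linearly independent as functions ℝ → ℝ. -/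
/-- For pairwise distinct shifts `b₁,…,bₙ`, the hat functions
`x ↦ max 0 (1 − |x − bᵢ|)` are linearly independent as functions `ℝ → ℝ`. -/
theorem hat_linearIndependent
    {n : ℕ} (b : Fin n → ℝ) (hb : Function.Injective b) :
    LinearIndependent ℝ (fun i => fun x : ℝ => max 0 (1 - |x - b i|)) := by
  rw [Fintype.linearIndependent_iff]
  intro g hg
  by_contra hne
  push_neg at hne
  obtain ⟨i0, hi0⟩ := hne
  set S : Finset (Fin n) := Finset.univ.filter (fun i => g i ≠ 0) with hSdef
  have hS : S.Nonempty := ⟨i0, by simp [hSdef, hi0]⟩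
  obtain ⟨j, hjS, hjmax⟩ := S.exists_max_image b hS
  have hjlt : ∀ i ∈ S, i ≠ j → b i < b j := by
    intro i hi hij
    exact lt_of_le_of_ne (hjmax i hi) (fun h => hij (hb h))
  -- choose ε
  set T : Finset ℝ := (S.erase j).image (fun i => b j - b i) with hTdef
  by_cases hT : T.Nonempty
  · set ε : ℝ := min 1 (T.min' hT) with hε
    have hεpos : 0 < ε := by
      apply lt_min one_pos
      obtain ⟨i, hi, heq⟩ := Finset.mem_image.mp (T.min'_mem hT)
      rw [← heq]
      have hiS := Finset.mem_of_mem_erase hi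
      have hij := Finset.ne_of_mem_erase hi
      linarith [hjlt i hiS hij]
    have hε1 : ε ≤ 1 := min_le_left _ _
    have hεle : ∀ i ∈ S, i ≠ j → ε ≤ b j - b i := by
      intro i hi hij
      refine le_trans (min_le_right _ _) (T.min'_le _ ?_)
      exact Finset.mem_image.mpr ⟨i, Finset.mem_erase.mpr ⟨hij, hi⟩, rfl⟩
    have hx := congrFun hg (b j + 1 - ε)
    simp only [Finset.sum_apply, Pi.smul_apply, smul_eq_mul, Pi.zero_apply] at hx
    have hsum : ∑ i, g i * max 0 (1 - |b j + 1 - ε - b i|) = g j * ε := by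
      rw [Finset.sum_eq_single j]
      · congr 1
        have : |b j + 1 - ε - b j| = 1 - ε := by
          rw [abs_of_nonneg (by linarith)]; ring
        rw [this]
        rw [max_eq_right (by linarith)]
        ring_nf
      · intro i _ hij
        by_cases hiS : i ∈ S
        · have h1 : ε ≤ b j - b i := hεle i hiS hij
          have : |b j + 1 - ε - b i| = b j + 1 - ε - b i := by
            rw [abs_of_nonneg (by linarith)]
          rw [this, max_eq_left (by linarith), mul_zero]
        · have : g i = 0 := by
            by_contra h
            exact hiS (Finset.mem_filter.mpr ⟨Finset.mem_univ _, h⟩)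
          rw [this, zero_mul]
      · intro h; exact absurd (Finset.mem_univ j) h
    rw [hsum] at hx
    have : g j = 0 := by
      rcases mul_eq_zero.mp hx with h | h
      · exact h
      · exact absurd h (ne_of_gt hεpos)
    exact (Finset.mem_filter.mp hjS).2 this
  · -- S = {j}; use ε = 1, evaluate at b j
    have hx := congrFun hg (b j)
    simp only [Finset.sum_apply, Pi.smul_apply, smul_eq_mul, Pi.zero_apply] at hx
    have hsum : ∑ i, g i * max 0 (1 - |b j - b i|) = g j * 1 := by
      rw [Finset.sum_eq_single j]
      · simp
      · intro i _ hij
        by_cases hiS : i ∈ S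
        · exact absurd ⟨b j - b i, Finset.mem_image.mpr ⟨i, Finset.mem_erase.mpr ⟨hij, hiS⟩, rfl⟩⟩ hT
        · have : g i = 0 := by
            by_contra h
            exact hiS (Finset.mem_filter.mpr ⟨Finset.mem_univ _, h⟩)
          rw [this, zero_mul]
      · intro h; exact absurd (Finset.mem_univ j) h
    rw [hsum, mul_one] at hx
    exact (Finset.mem_filter.mp hjS).2 hx
end

section
/- For pairwise distinct real numbers b₁,…,bₙ, the functions x ↦ tanh(x + b_i), i = 1,…,n, are linearly independent as functions ℝ → ℝ. -/
/-!
Put `u = exp (2 x)` and `aᵢ = exp (2 bᵢ)`, so that `tanh (x + bᵢ) = (aᵢ u - 1) / (aᵢ u + 1)`.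
Multiplying by the common denominator `∏ⱼ (aⱼ u + 1)`, which does not vanish for `u > 0`, turns a
linear relation among the functions into a relation among the polynomials
`(aₖ X - 1) ∏_{j ≠ k} (aⱼ X + 1)` holding on infinitely many `u`, hence identically. Evaluating at
`-1/aᵢ`, a root of every one of these polynomials except the `i`-th, kills all coefficients but
the `i`-th one.
-/

open Finset Polynomial

theorem Real.tanh_eq_exp_two_mul (t : ℝ) :
    Real.tanh t = (Real.exp (2 * t) - 1) / (Real.exp (2 * t) + 1) := by
  have h : Real.exp (2 * t) = Real.exp t / Real.exp (-t) := by
    rw [← Real.exp_sub]; ring_nf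
  rw [Real.tanh_eq, h, div_sub_one (Real.exp_pos _).ne', div_add_one (Real.exp_pos _).ne',
    div_div_div_cancel_right₀ (Real.exp_pos _).ne']

theorem Polynomial.ker_pi_smul_leval_eq_bot {α K : Type*} [Field K] {φ w : α → K}
    (hφ : (Set.range φ).Infinite) (hw : ∀ x, w x ≠ 0) :
    LinearMap.ker (LinearMap.pi fun x => w x • leval (φ x)) = ⊥ := by
  refine LinearMap.ker_eq_bot'.mpr fun p hp => eq_zero_of_infinite_isRoot p (hφ.mono ?_)
  rintro _ ⟨x, rfl⟩
  simpa [hw x] using congrFun hp x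

section MoebiusNumerator

variable {K ι : Type*} [Field K] [Fintype ι] [DecidableEq ι]

noncomputable def moebiusNumerator (a : ι → K) (k : ι) : K[X] :=
  (C (a k) * X - 1) * ∏ j ∈ univ.erase k, (C (a j) * X + 1)

theorem eval_moebiusNumerator (a : ι → K) (k : ι) {u : K} (hk : a k * u + 1 ≠ 0) :
    (moebiusNumerator a k).eval u = (∏ j, (a j * u + 1)) * ((a k * u - 1) / (a k * u + 1)) := by
  simp only [moebiusNumerator, eval_mul, eval_sub, eval_add, eval_prod, eval_C, eval_X, eval_one,
    ← mul_prod_erase univ (fun j => a j * u + 1) (mem_univ k)]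
  field_simp [hk]

theorem eval_moebiusNumerator_of_ne (a : ι → K) {i k : ι} (hki : k ≠ i) (hai : a i ≠ 0) :
    (moebiusNumerator a k).eval (-(a i)⁻¹) = 0 := by
  simp only [moebiusNumerator, eval_mul, eval_prod]
  refine mul_eq_zero_of_right _ (prod_eq_zero (mem_erase.mpr ⟨hki.symm, mem_univ i⟩) ?_)
  simp [hai]

theorem eval_moebiusNumerator_self_ne_zero [NeZero (2 : K)] {a : ι → K} (ha : Function.Injective a)
    {i : ι} (hai : a i ≠ 0) : (moebiusNumerator a i).eval (-(a i)⁻¹) ≠ 0 := by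
  simp only [moebiusNumerator, eval_mul, eval_prod, eval_sub, eval_add, eval_C, eval_X, eval_one]
  refine mul_ne_zero ?_ (prod_ne_zero_iff.mpr fun j hj => ?_)
  · rw [mul_neg, mul_inv_cancel₀ hai, ← neg_add', one_add_one_eq_two, neg_ne_zero]
    exact two_ne_zero
  · field_simp
    rw [neg_add_eq_sub]
    exact div_ne_zero (sub_ne_zero.mpr (ha.ne (mem_erase.mp hj).1).symm) hai

theorem linearIndependent_moebiusNumerator [NeZero (2 : K)] {a : ι → K}
    (ha : Function.Injective a) (h0 : ∀ i, a i ≠ 0) : LinearIndependent K (moebiusNumerator a) :=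
  LinearIndependent.of_pairwise_dual_eq_zero_one _
    (fun i => ((moebiusNumerator a i).eval (-(a i)⁻¹))⁻¹ • leval (-(a i)⁻¹))
    (fun i k hik => by simp [eval_moebiusNumerator_of_ne a hik.symm (h0 i)])
    (fun i => by simp [eval_moebiusNumerator_self_ne_zero ha (h0 i)])

end MoebiusNumerator

/-- For pairwise distinct reals `b₁,…,bₙ`, the functions `x ↦ tanh (x + bᵢ)`
are linearly independent as functions `ℝ → ℝ`. -/
theorem tanh_linearIndependent
    {n : ℕ} (b : Fin n → ℝ) (hb : Function.Injective b) :
    LinearIndependent ℝ (fun i => fun x : ℝ => Real.tanh (x + b i)) := by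
  set a : Fin n → ℝ := fun j => Real.exp (2 * b j)
  have ha : Function.Injective a :=
    fun j k h => hb (mul_left_cancel₀ two_ne_zero (Real.exp_injective h))
  have hden (x : ℝ) (j : Fin n) : a j * Real.exp (2 * x) + 1 ≠ 0 := by positivity
  have hrange : (Set.range fun x : ℝ => Real.exp (2 * x)).Infinite :=
    Set.infinite_range_of_injective (Real.exp_injective.comp (mul_right_injective₀ two_ne_zero))
  have hD (x : ℝ) : ∏ j, (a j * Real.exp (2 * x) + 1) ≠ 0 :=
    prod_ne_zero_iff.mpr fun j _ => hden x j
  set Φ := LinearMap.pi fun x : ℝ =>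
    (∏ j, (a j * Real.exp (2 * x) + 1))⁻¹ • leval (Real.exp (2 * x))
  have hΦ : LinearMap.ker Φ = ⊥ := ker_pi_smul_leval_eq_bot hrange fun x => inv_ne_zero (hD x)
  have hcomp : ⇑Φ ∘ moebiusNumerator a = fun i x => Real.tanh (x + b i) := by
    funext i x
    have hexp : Real.exp (2 * (x + b i)) = a i * Real.exp (2 * x) := by
      rw [mul_add, Real.exp_add, mul_comm]
    simp only [Function.comp_apply, Φ, LinearMap.pi_apply, LinearMap.smul_apply, leval_apply,
      smul_eq_mul, eval_moebiusNumerator a i (hden x i), inv_mul_cancel_left₀ (hD x)]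
    rw [Real.tanh_eq_exp_two_mul, hexp]
  exact hcomp ▸ (linearIndependent_moebiusNumerator ha fun i => (Real.exp_pos _).ne').map' Φ hΦ
end

section
/- For pairwise distinct nonnegative reals b₁,…,bₙ, the ReLU functions x ↦ max(0, x − b_i), i = 1,…,n, are linearly independent as functions ℝ → ℝ. -/
/-- For pairwise distinct nonnegative reals `b₁,…,bₙ`, the ReLU functions
`x ↦ max 0 (x − bᵢ)` are linearly independent as functions `ℝ → ℝ`. -/
theorem relu_linearIndependent
    {n : ℕ} (b : Fin n → ℝ) (hb : Function.Injective b) (hb0 : ∀ i, 0 ≤ b i) :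
    LinearIndependent ℝ (fun i => fun x : ℝ => max 0 (x - b i)) := by
  rw [Fintype.linearIndependent_iff]
  intro c hc j
  have hx : ∀ x : ℝ, ∑ i, c i * max 0 (x - b i) = 0 := by
    intro x
    have := congrFun hc x
    simpa using this
  obtain ⟨h, hpos, hlt⟩ : ∃ h : ℝ, 0 < h ∧ ∀ i, i ≠ j → h < |b i - b j| := by
    rcases (Finset.univ.erase j).eq_empty_or_nonempty with he | hne
    · exact ⟨1, one_pos, fun i hi =>
        absurd (Finset.mem_erase.mpr ⟨hi, Finset.mem_univ i⟩) (by simp [he])⟩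
    · set M := (Finset.univ.erase j).inf' hne (fun i => |b i - b j|) with hM
      have hMpos : 0 < M := by
        rw [hM, Finset.lt_inf'_iff]
        intro i hi
        exact abs_pos.mpr (sub_ne_zero.mpr fun e => (Finset.mem_erase.mp hi).1 (hb e))
      refine ⟨M / 2, by linarith, fun i hi => ?_⟩
      have hle : M ≤ |b i - b j| :=
        Finset.inf'_le _ (Finset.mem_erase.mpr ⟨hi, Finset.mem_univ i⟩)
      linarith
  set T : Fin n → ℝ := fun i =>
    max 0 (b j + h - b i) + max 0 (b j - h - b i) - 2 * max 0 (b j - b i) with hT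
  have hsum0 : ∑ i, c i * T i = 0 := by
    have e1 := hx (b j + h)
    have e2 := hx (b j - h)
    have e3 := hx (b j)
    have : ∑ i, c i * T i =
        (∑ i, c i * max 0 (b j + h - b i)) + (∑ i, c i * max 0 (b j - h - b i))
          - 2 * ∑ i, c i * max 0 (b j - b i) := by
      rw [Finset.mul_sum, ← Finset.sum_add_distrib, ← Finset.sum_sub_distrib]
      exact Finset.sum_congr rfl fun i _ => by rw [hT]; ring
    rw [this, e1, e2, e3]; ring
  have hsum : ∑ i, c i * T i = c j * h := by
    rw [Finset.sum_eq_single j]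
    · have : T j = h := by
        rw [hT]
        simp only [sub_self]
        rw [max_eq_right (by linarith), max_eq_left (by linarith), max_self]
        ring
      rw [this]
    · intro i _ hi
      have habs := hlt i hi
      have hTi : T i = 0 := by
        rcases le_or_gt (b i) (b j) with hle | hgt
        · have hne : b i ≠ b j := fun e => hi (hb e)
          have h1 : b i < b j - h := by
            rw [abs_of_nonpos (by linarith)] at habs
            linarith
          simp only [hT]
          rw [max_eq_right (by linarith), max_eq_right (by linarith),
            max_eq_right (by linarith)]
          ring
        · have h1 : b j + h < b i := by
            rw [abs_of_pos (by linarith)] at habs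
            linarith
          simp only [hT]
          rw [max_eq_left (by linarith), max_eq_left (by linarith),
            max_eq_left (by linarith)]
          ring
      rw [hTi, mul_zero]
    · intro hj; exact absurd (Finset.mem_univ j) hj
  have : c j * h = 0 := by rw [← hsum, hsum0]
  exact (mul_eq_zero.mp this).resolve_right hpos.ne'
end
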